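/- arXiv:2605.29782 — 9 statements merged into one kernel-verified Lean document; each statement's English description precedes it below -/
import Mathlib

section
/- Let d ≥ 1, let ε > 0, let g ∈ ℝ^d, and let G = diag(g) ∈ ℝ^{d×d}. Define RMSNorm(x) = G · x / √((1/d)‖x‖₂² + ε) for x ∈ ℝ^d. Then for all x₁, x₂ ∈ ℝ^d, ‖RMSNorm(x₁) − RMSNorm(x₂)‖₂ ≤ (‖g‖_∞ / √ε) · ‖x₁ − x₂‖₂, where ‖g‖_∞ = max_i |g_i|. -/
/-!
RMSNorm is `diag(g)` composed with `x ↦ x / √(‖x‖²/d + ε)`, and `diag(g)` scales norms by at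
most `‖g‖_∞`. Up to the factor `√(1/d)`, `x / √(‖x‖²/d + ε)` is the first component of the radial
projection `v ↦ v / ‖v‖` of the lifted vector `v = (√(1/d) • x, √ε) ∈ ℝ^d × ℝ`, whose norm is at
least `√ε`. The radial projection satisfies `‖v‖ ‖w‖ ‖v/‖v‖ - w/‖w‖‖² ≤ ‖v - w‖²`, which after
expanding both sides is `2 ‖v‖ ‖w‖ ≤ ‖v‖² + ‖w‖²`; lifting `x₁, x₂` leaves `‖v - w‖ = √(1/d) ‖x₁ - x₂‖`.
-/

open RealInnerProductSpace

section InnerProductSpace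

variable {F : Type*} [NormedAddCommGroup F] [InnerProductSpace ℝ F]

theorem norm_mul_norm_mul_norm_inv_smul_sub_sq_le (v w : F) :
    ‖v‖ * ‖w‖ * ‖‖v‖⁻¹ • v - ‖w‖⁻¹ • w‖ ^ 2 ≤ ‖v - w‖ ^ 2 := by
  rcases eq_or_ne v 0 with rfl | hv
  · simp
  rcases eq_or_ne w 0 with rfl | hw
  · simp
  have hv' : ‖v‖ ≠ 0 := norm_ne_zero_iff.mpr hv
  have hw' : ‖w‖ ≠ 0 := norm_ne_zero_iff.mpr hw
  have expand : ‖v‖ * ‖w‖ * ‖‖v‖⁻¹ • v - ‖w‖⁻¹ • w‖ ^ 2 = 2 * ‖v‖ * ‖w‖ - 2 * ⟪v, w⟫ := by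
    rw [norm_sub_sq_real, norm_smul, norm_smul, real_inner_smul_left, real_inner_smul_right]
    simp only [norm_inv, norm_norm]
    field_simp
    ring
  rw [expand, norm_sub_sq_real]
  nlinarith [sq_nonneg (‖v‖ - ‖w‖)]

theorem norm_inv_sqrt_smul_sub_le {c ε : ℝ} (hc : 0 < c) (hε : 0 < ε) (x y : F) :
    ‖(√(c * ‖x‖ ^ 2 + ε))⁻¹ • x - (√(c * ‖y‖ ^ 2 + ε))⁻¹ • y‖ ≤ ‖x - y‖ / √ε := by
  set u := (√(c * ‖x‖ ^ 2 + ε))⁻¹ • x - (√(c * ‖y‖ ^ 2 + ε))⁻¹ • y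
  set lift : F → WithLp 2 (F × ℝ) := fun z => WithLp.toLp 2 (√c • z, √ε)
  have norm_lift (z : F) : ‖lift z‖ = √(c * ‖z‖ ^ 2 + ε) := by
    rw [← Real.sqrt_sq (norm_nonneg _), WithLp.prod_norm_sq_eq_of_L2]
    simp [lift, norm_smul, mul_pow, Real.sq_sqrt hc.le, Real.sq_sqrt hε.le]
  have sqrt_le_norm_lift (z : F) : √ε ≤ ‖lift z‖ := by
    rw [norm_lift]
    gcongr
    nlinarith [sq_nonneg ‖z‖]
  have fst_eq : (‖lift x‖⁻¹ • lift x - ‖lift y‖⁻¹ • lift y).fst = √c • u := by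
    simp [u, norm_lift, lift, smul_sub, smul_comm √c]
  have norm_lift_sub : ‖lift x - lift y‖ = √c * ‖x - y‖ := by
    rw [← WithLp.toLp_sub, Prod.mk_sub_mk, sub_self, WithLp.norm_toLp_fst, ← smul_sub, norm_smul,
      Real.norm_of_nonneg (Real.sqrt_nonneg c)]
  have lifted_bound : ε * (√c * ‖u‖) ^ 2 ≤ (√c * ‖x - y‖) ^ 2 := calc
    ε * (√c * ‖u‖) ^ 2
      = √ε * √ε * ‖(‖lift x‖⁻¹ • lift x - ‖lift y‖⁻¹ • lift y).fst‖ ^ 2 := by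
        rw [fst_eq, Real.mul_self_sqrt hε.le, norm_smul, Real.norm_of_nonneg (Real.sqrt_nonneg c)]
    _ ≤ ‖lift x‖ * ‖lift y‖ * ‖‖lift x‖⁻¹ • lift x - ‖lift y‖⁻¹ • lift y‖ ^ 2 := by
        gcongr
        · exact sqrt_le_norm_lift x
        · exact sqrt_le_norm_lift y
        · exact WithLp.norm_fst_le _ _
    _ ≤ ‖lift x - lift y‖ ^ 2 := norm_mul_norm_mul_norm_inv_smul_sub_sq_le _ _
    _ = (√c * ‖x - y‖) ^ 2 := by rw [norm_lift_sub]
  rw [mul_pow, mul_pow, Real.sq_sqrt hc.le, mul_left_comm] at lifted_bound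
  have sq_bound : ε * ‖u‖ ^ 2 ≤ ‖x - y‖ ^ 2 := le_of_mul_le_mul_left lifted_bound hc
  rw [le_div_iff₀ (Real.sqrt_pos.mpr hε),
    ← pow_le_pow_iff_left₀ (by positivity) (norm_nonneg _) two_ne_zero, mul_pow,
    Real.sq_sqrt hε.le]
  linarith

end InnerProductSpace

theorem PiLp.norm_le_mul_norm_of_forall_norm_apply_le {ι : Type*} [Fintype ι]
    {β : ι → Type*} [∀ i, SeminormedAddCommGroup (β i)] {M : ℝ} (hM : 0 ≤ M)
    {v w : PiLp 2 β} (h : ∀ i, ‖w i‖ ≤ M * ‖v i‖) : ‖w‖ ≤ M * ‖v‖ := by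
  refine le_of_sq_le_sq ?_ (by positivity)
  rw [mul_pow, PiLp.norm_sq_eq_of_L2, PiLp.norm_sq_eq_of_L2, Finset.mul_sum]
  gcongr with i
  rw [← mul_pow]
  exact pow_le_pow_left₀ (norm_nonneg _) (h i) 2

/-- Lipschitz continuity of RMSNorm: for `RMSNorm(x) = diag(g) · x / √((1/d)‖x‖₂² + ε)`,
`‖RMSNorm(x₁) − RMSNorm(x₂)‖₂ ≤ (‖g‖_∞ / √ε) · ‖x₁ − x₂‖₂`. -/
theorem rmsnorm_lipschitz (d : ℕ) (hd : 1 ≤ d) (ε : ℝ) (hε : 0 < ε)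
    (g : Fin d → ℝ)
    (RMSNorm : EuclideanSpace ℝ (Fin d) → EuclideanSpace ℝ (Fin d))
    (hRMS : ∀ (x : EuclideanSpace ℝ (Fin d)) (i : Fin d),
      RMSNorm x i = g i * x i / Real.sqrt ((1 / (d : ℝ)) * ‖x‖ ^ 2 + ε))
    (x₁ x₂ : EuclideanSpace ℝ (Fin d)) :
    ‖RMSNorm x₁ - RMSNorm x₂‖ ≤
      ((Finset.univ.sup' (Finset.univ_nonempty_iff.mpr ⟨⟨0, hd⟩⟩) fun i => |g i|)
          / Real.sqrt ε) * ‖x₁ - x₂‖ := by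
  set M := Finset.univ.sup' (Finset.univ_nonempty_iff.mpr ⟨⟨0, hd⟩⟩) fun i => |g i|
  have abs_le_M (i : Fin d) : |g i| ≤ M := Finset.le_sup' (fun j => |g j|) (Finset.mem_univ i)
  have M_nonneg : 0 ≤ M := (abs_nonneg _).trans (abs_le_M ⟨0, hd⟩)
  set normalize : EuclideanSpace ℝ (Fin d) → EuclideanSpace ℝ (Fin d) :=
    fun x => (√((1 / (d : ℝ)) * ‖x‖ ^ 2 + ε))⁻¹ • x
  have norm_apply_le (i : Fin d) :
      ‖(RMSNorm x₁ - RMSNorm x₂) i‖ ≤ M * ‖(normalize x₁ - normalize x₂) i‖ := by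
    simp only [normalize, PiLp.sub_apply, PiLp.smul_apply, smul_eq_mul, hRMS]
    have factor_g (a b : ℝ) :
        g i * x₁ i / a - g i * x₂ i / b = g i * (a⁻¹ * x₁ i - b⁻¹ * x₂ i) := by ring
    rw [factor_g, norm_mul, Real.norm_eq_abs]
    gcongr
    exact abs_le_M i
  calc ‖RMSNorm x₁ - RMSNorm x₂‖
      ≤ M * ‖normalize x₁ - normalize x₂‖ :=
        PiLp.norm_le_mul_norm_of_forall_norm_apply_le M_nonneg norm_apply_le
    _ ≤ M * (‖x₁ - x₂‖ / √ε) := by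
        gcongr
        exact norm_inv_sqrt_smul_sub_le (by positivity) hε x₁ x₂
    _ = M / √ε * ‖x₁ - x₂‖ := by ring
end

section
/- Let d ≥ 1 and ε > 0. Define y : ℝ^d → ℝ^d by y(x) = x / √((1/d)‖x‖₂² + ε). Then y is globally Lipschitz continuous with Lipschitz constant 1/√ε: for all x₁, x₂ ∈ ℝ^d, ‖y(x₁) − y(x₂)‖₂ ≤ (1/√ε) · ‖x₁ − x₂‖₂. -/
/-!
Write `y x = ρ ‖x‖ • x` with `ρ t = (c t² + ε)^(-1/2)` and `c = 1/d`. For such a radial map,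
`‖ρ ‖x₁‖ • x₁ - ρ ‖x₂‖ • x₂‖²` exceeds its value for collinear `x₁`, `x₂` by
`2 ρ(‖x₁‖) ρ(‖x₂‖) (‖x₁‖‖x₂‖ - ⟪x₁, x₂⟫)`, while `‖x₁ - x₂‖²` exceeds its collinear value by twice
the same Cauchy–Schwarz defect. Since `ρ ≤ 1/√ε`, the bound reduces to the scalar profile
`t ↦ ρ t * t`, whose derivative `ε (c t² + ε)^(-3/2)` is at most `1/√ε`.
-/

open Real Set

section Radial

variable {E : Type*} [NormedAddCommGroup E] [InnerProductSpace ℝ E]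

theorem norm_smul_norm_sub_smul_norm_le {ρ : ℝ → ℝ} {K : ℝ} (hρ : ∀ t, 0 ≤ t → |ρ t| ≤ K)
    (hlip : ∀ s t, 0 ≤ s → 0 ≤ t → |ρ s * s - ρ t * t| ≤ K * |s - t|) (x₁ x₂ : E) :
    ‖ρ ‖x₁‖ • x₁ - ρ ‖x₂‖ • x₂‖ ≤ K * ‖x₁ - x₂‖ := by
  set a := ρ ‖x₁‖
  set b := ρ ‖x₂‖
  have hK : 0 ≤ K := (abs_nonneg _).trans (hρ 0 le_rfl)
  have hab : a * b ≤ K ^ 2 := calc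
    a * b ≤ |a| * |b| := (le_abs_self _).trans (abs_mul a b).le
    _ ≤ K * K := mul_le_mul (hρ _ (norm_nonneg _)) (hρ _ (norm_nonneg _)) (abs_nonneg _) hK
    _ = K ^ 2 := (sq K).symm
  have hcollinear : (a * ‖x₁‖ - b * ‖x₂‖) ^ 2 ≤ K ^ 2 * (‖x₁‖ - ‖x₂‖) ^ 2 := by
    simpa only [sq_abs, mul_pow] using
      pow_le_pow_left₀ (abs_nonneg _) (hlip _ _ (norm_nonneg x₁) (norm_nonneg x₂)) 2
  have hdefect := mul_le_mul_of_nonneg_right hab (sub_nonneg.2 (real_inner_le_norm x₁ x₂))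
  refine le_of_pow_le_pow_left₀ two_ne_zero (by positivity) ?_
  rw [mul_pow, norm_sub_sq_real, norm_sub_sq_real, norm_smul, norm_smul, real_inner_smul_left,
    real_inner_smul_right, mul_pow, mul_pow, Real.norm_eq_abs, Real.norm_eq_abs, sq_abs, sq_abs]
  nlinarith

end Radial

section Scalar

variable {c ε : ℝ}

theorem sqrt_le_sqrt_mul_sq_add (hc : 0 ≤ c) (t : ℝ) : √ε ≤ √(c * t ^ 2 + ε) :=
  Real.sqrt_le_sqrt (by nlinarith [mul_nonneg hc (sq_nonneg t)])

theorem abs_inv_sqrt_mul_sq_add_le (hc : 0 ≤ c) (hε : 0 < ε) (t : ℝ) :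
    |(√(c * t ^ 2 + ε))⁻¹| ≤ 1 / √ε := by
  rw [abs_inv, abs_of_nonneg (Real.sqrt_nonneg _), one_div]
  exact inv_anti₀ (Real.sqrt_pos.2 hε) (sqrt_le_sqrt_mul_sq_add hc t)

theorem hasDerivAt_inv_sqrt_mul_sq_add_mul {t : ℝ} (hq : 0 < c * t ^ 2 + ε) :
    HasDerivAt (fun t ↦ (√(c * t ^ 2 + ε))⁻¹ * t) (ε / √(c * t ^ 2 + ε) ^ 3) t := by
  have hr : 0 < √(c * t ^ 2 + ε) := Real.sqrt_pos.2 hq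
  refine (((((hasDerivAt_pow 2 t).const_mul c).add_const ε).sqrt hq.ne').fun_inv hr.ne'
    |>.fun_mul (hasDerivAt_id' t)).congr_deriv ?_
  field_simp
  rw [Real.sq_sqrt hq.le]
  norm_num
  ring

theorem abs_inv_sqrt_mul_sq_add_mul_sub_le (hc : 0 ≤ c) (hε : 0 < ε) (s t : ℝ) :
    |(√(c * s ^ 2 + ε))⁻¹ * s - (√(c * t ^ 2 + ε))⁻¹ * t| ≤ 1 / √ε * |s - t| := by
  have hq (u : ℝ) : 0 < c * u ^ 2 + ε := by positivity
  refine convex_univ.norm_image_sub_le_of_norm_hasDerivWithin_le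
    (fun u _ ↦ (hasDerivAt_inv_sqrt_mul_sq_add_mul (hq u)).hasDerivWithinAt)
    (fun u _ ↦ ?_) (mem_univ t) (mem_univ s)
  have hpow := pow_le_pow_left₀ (Real.sqrt_nonneg ε) (sqrt_le_sqrt_mul_sq_add hc u) 3
  rw [Real.norm_of_nonneg (by positivity), div_le_div_iff₀ (by positivity) (by positivity)]
  calc ε * √ε = √ε ^ 3 := by rw [pow_succ, Real.sq_sqrt hε.le]
    _ ≤ 1 * √(c * u ^ 2 + ε) ^ 3 := by rwa [one_mul]

end Scalar

theorem rms_unscaled_lipschitz_general (d : ℕ) (ε : ℝ) (hε : 0 < ε)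
    (y : EuclideanSpace ℝ (Fin d) → EuclideanSpace ℝ (Fin d))
    (hy : ∀ x : EuclideanSpace ℝ (Fin d),
      y x = (Real.sqrt ((1 / (d : ℝ)) * ‖x‖ ^ 2 + ε))⁻¹ • x)
    (x₁ x₂ : EuclideanSpace ℝ (Fin d)) :
    ‖y x₁ - y x₂‖ ≤ (1 / Real.sqrt ε) * ‖x₁ - x₂‖ := by
  have hc : (0 : ℝ) ≤ 1 / (d : ℝ) := by positivity
  rw [hy, hy]
  exact norm_smul_norm_sub_smul_norm_le (ρ := fun t ↦ (√(1 / (d : ℝ) * t ^ 2 + ε))⁻¹)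
    (fun t _ ↦ abs_inv_sqrt_mul_sq_add_le hc hε t)
    (fun s t _ _ ↦ abs_inv_sqrt_mul_sq_add_mul_sub_le hc hε s t) x₁ x₂

/-- The unscaled RMS-normalization map `y(x) = x / √((1/d)‖x‖₂² + ε)` is globally
Lipschitz continuous with constant `1/√ε`. -/
theorem rms_unscaled_lipschitz (d : ℕ) (hd : 1 ≤ d) (ε : ℝ) (hε : 0 < ε)
    (y : EuclideanSpace ℝ (Fin d) → EuclideanSpace ℝ (Fin d))
    (hy : ∀ x : EuclideanSpace ℝ (Fin d),
      y x = (Real.sqrt ((1 / (d : ℝ)) * ‖x‖ ^ 2 + ε))⁻¹ • x)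
    (x₁ x₂ : EuclideanSpace ℝ (Fin d)) :
    ‖y x₁ - y x₂‖ ≤ (1 / Real.sqrt ε) * ‖x₁ - x₂‖ :=
  rms_unscaled_lipschitz_general d ε hε y hy x₁ x₂
end

section
/- Let n ≥ 1 and let softmax : ℝ^n → ℝ^n be defined by softmax(p)_i = e^{p_i} / Σ_{j=1}^n e^{p_j}. Then softmax is globally (1/2)-Lipschitz with respect to the Euclidean norm: for all p₁, p₂ ∈ ℝ^n, ‖softmax(p₁) − softmax(p₂)‖₂ ≤ (1/2) ‖p₁ − p₂‖₂. -/
/-- The softmax function on `ℝ^n`: `softmax(p)_i = e^{p_i} / Σ_j e^{p_j}`. -/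
noncomputable def softmax {n : ℕ} (p : EuclideanSpace ℝ (Fin n)) :
    EuclideanSpace ℝ (Fin n) :=
  WithLp.toLp 2 (fun i => Real.exp (p i) / ∑ j, Real.exp (p j))

noncomputable def smJ {n : ℕ} (p : EuclideanSpace ℝ (Fin n)) :
    EuclideanSpace ℝ (Fin n) →L[ℝ] EuclideanSpace ℝ (Fin n) :=
  LinearMap.toContinuousLinearMap
  { toFun := fun v => (WithLp.toLp 2 (fun i => softmax p i * v i - softmax p i * ∑ j, softmax p j * v j) :
      EuclideanSpace ℝ (Fin n))
    map_add' := by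
      intro v w
      ext i
      simp only [PiLp.add_apply, mul_add]
      rw [Finset.sum_add_distrib]
      ring
    map_smul' := by
      intro c v
      ext i
      simp only [PiLp.smul_apply, smul_eq_mul, RingHom.id_apply, Finset.mul_sum, mul_sub,
        Finset.mul_sum]
      congr 1
      · ring
      · exact Finset.sum_congr rfl fun j _ => by ring }

set_option maxHeartbeats 1000000 in
lemma softmax_hasFDerivAt {n : ℕ} (hn : 1 ≤ n) (p : EuclideanSpace ℝ (Fin n))
    (J : EuclideanSpace ℝ (Fin n) →L[ℝ] EuclideanSpace ℝ (Fin n))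
    (hJ : ∀ v i, J v i = softmax p i * v i - softmax p i * ∑ j, softmax p j * v j) :
    HasFDerivAt softmax J p := by
  have hS : (0:ℝ) < ∑ j, Real.exp (p j) :=
    Finset.sum_pos (fun _ _ => Real.exp_pos _) ⟨⟨0, hn⟩, Finset.mem_univ _⟩
  set S : ℝ := ∑ j, Real.exp (p j) with hSdef
  set DS : EuclideanSpace ℝ (Fin n) →L[ℝ] ℝ :=
    ∑ j, Real.exp (p j) • EuclideanSpace.proj j with hDSdef
  have hDS : HasFDerivAt (fun q : EuclideanSpace ℝ (Fin n) => ∑ j, Real.exp (q j)) DS p := by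
    apply HasFDerivAt.fun_sum
    intro j _
    exact (EuclideanSpace.proj (𝕜 := ℝ) j).hasFDerivAt.exp
  have hinv : HasFDerivAt (fun q : EuclideanSpace ℝ (Fin n) => (∑ j, Real.exp (q j))⁻¹)
      ((-(S^2)⁻¹) • DS) p :=
    (hasDerivAt_inv hS.ne').comp_hasFDerivAt p hDS
  have hc : ∀ i, HasFDerivAt (fun q : EuclideanSpace ℝ (Fin n) => Real.exp (q i))
      (Real.exp (p i) • EuclideanSpace.proj (𝕜 := ℝ) i) p :=
    fun i => (EuclideanSpace.proj (𝕜 := ℝ) i).hasFDerivAt.exp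
  have hgi : ∀ i, HasFDerivAt
      (fun q : EuclideanSpace ℝ (Fin n) => Real.exp (q i) * (∑ j, Real.exp (q j))⁻¹)
      (Real.exp (p i) • ((-(S^2)⁻¹) • DS)
        + S⁻¹ • (Real.exp (p i) • EuclideanSpace.proj (𝕜 := ℝ) i)) p :=
    fun i => (hc i).mul hinv
  have hpi : HasFDerivAt
      (fun (q : EuclideanSpace ℝ (Fin n)) (i : Fin n) =>
        Real.exp (q i) * (∑ j, Real.exp (q j))⁻¹)
      (ContinuousLinearMap.pi (fun i => Real.exp (p i) • ((-(S^2)⁻¹) • DS)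
        + S⁻¹ • (Real.exp (p i) • EuclideanSpace.proj (𝕜 := ℝ) i))) p :=
    hasFDerivAt_pi.2 hgi
  set L := (PiLp.continuousLinearEquiv 2 ℝ (fun _ : Fin n => ℝ)).symm
  have hcomp := (L.toContinuousLinearMap.hasFDerivAt).comp p hpi
  have heq : softmax = (fun q : EuclideanSpace ℝ (Fin n) =>
      L.toContinuousLinearMap (fun i => Real.exp (q i) * (∑ j, Real.exp (q j))⁻¹)) := by
    funext q
    ext i
    simp [softmax, div_eq_mul_inv, L, PiLp.continuousLinearEquiv]
    rfl
  rw [heq]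
  refine hcomp.congr_fderiv (Eq.symm ?_)
  refine ContinuousLinearMap.ext fun v => ?_
  refine PiLp.ext fun i => ?_
  have h1 : (L.toContinuousLinearMap.comp (ContinuousLinearMap.pi
      (fun i => Real.exp (p i) • ((-(S^2)⁻¹) • DS)
        + S⁻¹ • (Real.exp (p i) • EuclideanSpace.proj (𝕜 := ℝ) i)))) v i
      = Real.exp (p i) * (-(S^2)⁻¹ * (DS v)) + S⁻¹ * (Real.exp (p i) * v i) := by
    simp [L, PiLp.continuousLinearEquiv]
    rfl
  have h2 : DS v = ∑ j, Real.exp (p j) * v j := by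
    simp [hDSdef]
  rw [hJ, h1, h2]
  have h3 : ∀ j, softmax p j * v j = Real.exp (p j) * v j / S := by
    intro j; simp [softmax, hSdef]; ring
  simp only [softmax, ← hSdef]
  rw [Finset.sum_congr rfl (fun (j : Fin n) _ =>
    (div_mul_eq_mul_div (Real.exp (p j)) S (v j))), ← Finset.sum_div]
  field_simp
  ring


lemma schur_bound {n : ℕ} (s v : Fin n → ℝ) (hs0 : ∀ i, 0 ≤ s i) (hs1 : ∑ i, s i = 1) :
    ∑ i, (s i * v i - s i * ∑ j, s j * v j) ^ 2 ≤ (1/4) * ∑ i, v i ^ 2 := by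
  have hsle : ∀ i, s i ≤ 1 := by
    intro i
    calc s i ≤ ∑ j, s j := Finset.single_le_sum (fun j _ => hs0 j) (Finset.mem_univ i)
    _ = 1 := hs1
  set a : Fin n → Fin n → ℝ := fun i j => s i * (if i = j then 1 - s j else s j) with ha
  have ha_nn : ∀ i j, 0 ≤ a i j := by
    intro i j
    apply mul_nonneg (hs0 i)
    split
    · linarith [hsle j]
    · exact hs0 j
  have hrow : ∀ i, ∑ j, a i j = 2 * s i * (1 - s i) := by
    intro i
    have h1 : ∀ j, a i j = s i * s j + (if i = j then s i * (1 - 2 * s j) else 0) := by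
      intro j; simp only [ha]; split <;> ring
    simp only [h1]
    rw [Finset.sum_add_distrib, ← Finset.mul_sum, hs1, Finset.sum_ite_eq]
    simp; ring
  have hrow_le : ∀ i, ∑ j, a i j ≤ 1/2 := by
    intro i
    rw [hrow i]
    nlinarith [sq_nonneg (s i - 1/2), hs0 i, hsle i]
  have hJdec : ∀ i, s i * v i - s i * ∑ j, s j * v j
      = ∑ j, (s i * ((if i = j then 1 else 0) - s j)) * v j := by
    intro i
    have h1 : ∀ j, (s i * ((if i = j then 1 else 0) - s j)) * v j
        = (if i = j then s i * v j else 0) - s i * (s j * v j) := by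
      intro j; split <;> ring
    simp only [h1]
    rw [Finset.sum_sub_distrib, Finset.sum_ite_eq, ← Finset.mul_sum]
    simp
  have hCS : ∀ i, (s i * v i - s i * ∑ j, s j * v j) ^ 2
      ≤ (∑ j, a i j) * (∑ j, a i j * v j ^ 2) := by
    intro i
    rw [hJdec i]
    have habs : ∀ j, |(s i * ((if i = j then 1 else 0) - s j)) * v j| = a i j * |v j| := by
      intro j
      rw [abs_mul]
      congr 1
      simp only [ha]
      split
      · rename_i h; subst h
        rw [abs_of_nonneg (mul_nonneg (hs0 i) (by linarith [hsle i]))]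
      · rw [abs_of_nonpos (by nlinarith [hs0 i, hs0 j])]
        ring
    calc (∑ j, (s i * ((if i = j then 1 else 0) - s j)) * v j) ^ 2
        ≤ (∑ j, |(s i * ((if i = j then 1 else 0) - s j)) * v j|) ^ 2 := by
          rw [← sq_abs (∑ j, _)]
          exact pow_le_pow_left₀ (abs_nonneg _) (Finset.abs_sum_le_sum_abs _ _) 2
      _ = (∑ j, Real.sqrt (a i j) * (Real.sqrt (a i j) * |v j|)) ^ 2 := by
          congr 1
          refine Finset.sum_congr rfl fun j _ => ?_
          rw [habs j, ← mul_assoc, Real.mul_self_sqrt (ha_nn i j)]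
      _ ≤ (∑ j, Real.sqrt (a i j) ^ 2) * (∑ j, (Real.sqrt (a i j) * |v j|) ^ 2) :=
          Finset.sum_mul_sq_le_sq_mul_sq _ _ _
      _ = (∑ j, a i j) * (∑ j, a i j * v j ^ 2) := by
          congr 1
          · exact Finset.sum_congr rfl fun j _ => Real.sq_sqrt (ha_nn i j)
          · refine Finset.sum_congr rfl fun j _ => ?_
            rw [mul_pow, Real.sq_sqrt (ha_nn i j), sq_abs]
  calc ∑ i, (s i * v i - s i * ∑ j, s j * v j) ^ 2
      ≤ ∑ i, (∑ j, a i j) * (∑ j, a i j * v j ^ 2) := Finset.sum_le_sum fun i _ => hCS i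
    _ ≤ ∑ i, (1/2) * (∑ j, a i j * v j ^ 2) := by
        refine Finset.sum_le_sum fun i _ => ?_
        apply mul_le_mul_of_nonneg_right (hrow_le i)
        exact Finset.sum_nonneg fun j _ => mul_nonneg (ha_nn i j) (sq_nonneg _)
    _ = (1/2) * ∑ j, (∑ i, a i j) * v j ^ 2 := by
        rw [← Finset.mul_sum, Finset.sum_comm]
        congr 1
        exact Finset.sum_congr rfl fun j _ => (Finset.sum_mul _ _ _).symm
    _ ≤ (1/2) * ∑ j, (1/2) * v j ^ 2 := by
        apply mul_le_mul_of_nonneg_left _ (by norm_num)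
        refine Finset.sum_le_sum fun j _ => ?_
        apply mul_le_mul_of_nonneg_right _ (sq_nonneg _)
        have hcol : ∑ i, a i j = ∑ i, a j i := by
          refine Finset.sum_congr rfl fun i _ => ?_
          simp only [ha]
          rcases eq_or_ne i j with h | h
          · subst h; simp
          · rw [if_neg h, if_neg (Ne.symm h)]; ring
        rw [hcol]; exact hrow_le j
    _ = (1/4) * ∑ i, v i ^ 2 := by rw [← Finset.mul_sum]; ring


lemma smJ_norm_le {n : ℕ} (hn : 1 ≤ n) (p : EuclideanSpace ℝ (Fin n)) :
    ‖smJ p‖ ≤ 1/2 := by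
  apply ContinuousLinearMap.opNorm_le_bound _ (by norm_num)
  intro v
  have hS : (0:ℝ) < ∑ j, Real.exp (p j) :=
    Finset.sum_pos (fun _ _ => Real.exp_pos _) ⟨⟨0, hn⟩, Finset.mem_univ _⟩
  have hs0 : ∀ i, 0 ≤ softmax p i := fun i => div_nonneg (Real.exp_pos _).le hS.le
  have hs1 : ∑ i, softmax p i = 1 := by
    simp only [softmax]
    rw [← Finset.sum_div, div_self hS.ne']
  have key := schur_bound (fun i => softmax p i) (fun i => v i) hs0 hs1
  have happ : ∀ i, smJ p v i = softmax p i * v i - softmax p i * ∑ j, softmax p j * v j :=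
    fun i => rfl
  rw [EuclideanSpace.norm_eq, EuclideanSpace.norm_eq]
  have h1 : ∑ i, ‖smJ p v i‖ ^ 2 ≤ (1/4) * ∑ i, ‖v i‖ ^ 2 := by
    simp only [Real.norm_eq_abs, sq_abs, happ]
    exact key
  calc Real.sqrt (∑ i, ‖smJ p v i‖ ^ 2) ≤ Real.sqrt ((1/4) * ∑ i, ‖v i‖ ^ 2) :=
        Real.sqrt_le_sqrt h1
    _ = 1/2 * Real.sqrt (∑ i, ‖v i‖ ^ 2) := by
        rw [Real.sqrt_mul (by norm_num)]
        congr 1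
        rw [show (1/4 : ℝ) = (1/2)^2 by norm_num, Real.sqrt_sq (by norm_num)]

/-- Softmax is globally `(1/2)`-Lipschitz with respect to the Euclidean norm. -/
theorem softmax_lipschitz (n : ℕ) (hn : 1 ≤ n) (p₁ p₂ : EuclideanSpace ℝ (Fin n)) :
    ‖softmax p₁ - softmax p₂‖ ≤ (1 / 2) * ‖p₁ - p₂‖ := by
  exact convex_univ.norm_image_sub_le_of_norm_hasFDerivWithin_le
    (f := softmax) (f' := fun q => smJ q)
    (fun q _ => (softmax_hasFDerivAt hn q (smJ q) (fun v i => rfl)).hasFDerivWithinAt)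
    (fun q _ => smJ_norm_le hn q) (Set.mem_univ p₂) (Set.mem_univ p₁)
end

section
/- Let a ∈ ℝ^n be a probability vector, i.e., a_i ≥ 0 for all i and Σ_{i=1}^n a_i = 1. Then the spectral norm of the symmetric matrix diag(a) − a aᵀ is at most 1/2. -/
open Finset

private noncomputable def Bf {n : ℕ} (a u v : Fin n → ℝ) : ℝ :=
  (∑ i, a i * u i * v i) - (∑ i, a i * u i) * (∑ i, a i * v i)

private lemma Bf_nonneg {n : ℕ} (a : Fin n → ℝ) (ha : ∀ i, 0 ≤ a i)
    (hsum : ∑ i, a i = 1) (u : Fin n → ℝ) : 0 ≤ Bf a u u := by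
  have key := Finset.sum_mul_sq_le_sq_mul_sq Finset.univ
    (fun i => Real.sqrt (a i)) (fun i => Real.sqrt (a i) * u i)
  have h1 : ∀ i ∈ Finset.univ (α := Fin n),
      Real.sqrt (a i) * (Real.sqrt (a i) * u i) = a i * u i := fun i _ => by
    rw [← mul_assoc, Real.mul_self_sqrt (ha i)]
  have h2 : ∀ i ∈ Finset.univ (α := Fin n),
      Real.sqrt (a i) ^ 2 = a i := fun i _ => Real.sq_sqrt (ha i)
  have h3 : ∀ i ∈ Finset.univ (α := Fin n),
      (Real.sqrt (a i) * u i) ^ 2 = a i * u i * u i := fun i _ => by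
    rw [mul_pow, Real.sq_sqrt (ha i)]; ring
  rw [Finset.sum_congr rfl h1, Finset.sum_congr rfl h2, Finset.sum_congr rfl h3,
    hsum, one_mul] at key
  simp only [Bf]
  nlinarith [key]

private lemma Bf_le_half {n : ℕ} (a : Fin n → ℝ) (ha : ∀ i, 0 ≤ a i)
    (hsum : ∑ i, a i = 1) (x : Fin n → ℝ) :
    Bf a x x ≤ 1 / 2 * ∑ i, x i ^ 2 := by
  haveI hn : Nonempty (Fin n) := by
    by_contra h
    rw [not_nonempty_iff] at h
    rw [Finset.univ_eq_empty, Finset.sum_empty] at hsum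
    norm_num at hsum
  obtain ⟨i0, -, hi0⟩ := Finset.exists_max_image Finset.univ x Finset.univ_nonempty
  obtain ⟨j0, -, hj0⟩ := Finset.exists_min_image Finset.univ x Finset.univ_nonempty
  set M := x i0 with hM
  set m := x j0 with hm
  set c : ℝ := (M + m) / 2 with hc
  set s := ∑ i, a i * x i with hs
  have e1 : ∑ i, a i * (x i - c) ^ 2
      = (∑ i, a i * x i * x i) - 2 * c * s + c ^ 2 := by
    have h : ∀ i ∈ Finset.univ (α := Fin n), a i * (x i - c) ^ 2
        = a i * x i * x i - 2 * c * (a i * x i) + c ^ 2 * a i := fun i _ => by ring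
    rw [Finset.sum_congr rfl h]
    rw [Finset.sum_add_distrib, Finset.sum_sub_distrib, ← Finset.mul_sum, ← Finset.mul_sum,
      hsum, ← hs]
    ring
  have step1 : Bf a x x ≤ ∑ i, a i * (x i - c) ^ 2 := by
    simp only [Bf, ← hs, e1]
    nlinarith [sq_nonneg (s - c)]
  have step2 : ∑ i, a i * (x i - c) ^ 2 ≤ ((M - m) / 2) ^ 2 := by
    calc ∑ i, a i * (x i - c) ^ 2 ≤ ∑ i, a i * ((M - m) / 2) ^ 2 := by
          apply Finset.sum_le_sum
          intro i _
          refine mul_le_mul_of_nonneg_left ?_ (ha i)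
          have h1 : x i ≤ M := hi0 i (Finset.mem_univ i)
          have h2 : m ≤ x i := hj0 i (Finset.mem_univ i)
          apply sq_le_sq' <;> [skip; skip] <;> rw [hc] <;> linarith
      _ = ((M - m) / 2) ^ 2 := by rw [← Finset.sum_mul, hsum, one_mul]
  have hpos : 0 ≤ ∑ i, x i ^ 2 := Finset.sum_nonneg fun i _ => sq_nonneg _
  by_cases hij : i0 = j0
  · have hMm : M = m := by rw [hM, hm, hij]
    have h0 : ((M - m) / 2) ^ 2 = 0 := by rw [hMm]; ring
    linarith
  · have hpair : x i0 ^ 2 + x j0 ^ 2 ≤ ∑ i, x i ^ 2 := by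
      classical
      have h := Finset.sum_le_sum_of_subset_of_nonneg
        (Finset.subset_univ ({i0, j0} : Finset (Fin n)))
        (fun i _ _ => sq_nonneg (x i))
      rwa [Finset.sum_pair hij] at h
    have h3 : ((M - m) / 2) ^ 2 ≤ 1 / 2 * (M ^ 2 + m ^ 2) := by
      nlinarith [sq_nonneg (M + m)]
    simp only [← hM, ← hm] at hpair
    linarith

private lemma Bf_cs {n : ℕ} (a : Fin n → ℝ) (ha : ∀ i, 0 ≤ a i)
    (hsum : ∑ i, a i = 1) (u v : Fin n → ℝ) :
    Bf a u v ^ 2 ≤ Bf a u u * Bf a v v := by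
  have key : ∀ t : ℝ, 0 ≤ Bf a v v * (t * t) + (2 * Bf a u v) * t + Bf a u u := by
    intro t
    have h0 := Bf_nonneg a ha hsum (fun i => u i + t * v i)
    have hexp : Bf a (fun i => u i + t * v i) (fun i => u i + t * v i)
        = Bf a v v * (t * t) + (2 * Bf a u v) * t + Bf a u u := by
      simp only [Bf]
      have h1 : ∀ i ∈ Finset.univ (α := Fin n),
          a i * (u i + t * v i) * (u i + t * v i)
          = a i * u i * u i + (2 * (a i * u i * v i)) * t + (a i * v i * v i) * t ^ 2 :=
        fun i _ => by ring
      have h2 : ∀ i ∈ Finset.univ (α := Fin n),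
          a i * (u i + t * v i) = a i * u i + (a i * v i) * t := fun i _ => by ring
      rw [Finset.sum_congr rfl h1, Finset.sum_congr rfl h2]
      simp only [Finset.sum_add_distrib, ← Finset.sum_mul, ← Finset.mul_sum]
      ring
    rw [hexp] at h0
    linarith
  have hd := discrim_le_zero key
  rw [discrim] at hd
  nlinarith [hd]

/-- For a probability vector `a`, the spectral norm of the softmax Jacobian
`diag(a) − a aᵀ` is at most `1/2`. -/
theorem softmax_jacobian_norm_le (n : ℕ) (a : Fin n → ℝ)
    (ha : ∀ i, 0 ≤ a i) (hsum : ∑ i, a i = 1) :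
    ‖Matrix.toEuclideanCLM (𝕜 := ℝ)
        (Matrix.diagonal a - Matrix.of (fun i j => a i * a j))‖ ≤ 1 / 2 := by
  set A := Matrix.diagonal a - Matrix.of (fun i j => a i * a j) with hA
  set T := Matrix.toEuclideanCLM (𝕜 := ℝ) A with hT
  have happ : ∀ (x : EuclideanSpace ℝ (Fin n)) (i : Fin n),
      (T x) i = a i * x i - a i * ∑ j, a j * x j := by
    intro x i
    have : (T x) i = (A.mulVec (fun j => x j)) i := rfl
    rw [this, hA, Matrix.sub_mulVec]
    simp only [Pi.sub_apply, Matrix.mulVec_diagonal]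
    congr 1
    simp only [Matrix.mulVec, dotProduct, Matrix.of_apply]
    rw [Finset.mul_sum]
    exact Finset.sum_congr rfl fun j _ => by ring
  have hform : ∀ (u v : EuclideanSpace ℝ (Fin n)),
      (inner ℝ (T u) v : ℝ) = Bf a (fun i => u i) (fun i => v i) := by
    intro u v
    rw [PiLp.inner_apply]
    simp only [RCLike.inner_apply, starRingEnd_apply, star_trivial, happ u]
    simp only [Bf]
    rw [Finset.sum_congr rfl (fun i (_ : i ∈ Finset.univ) =>
      (by ring : v i * (a i * u i - a i * ∑ j, a j * u j)
        = a i * u i * v i - (∑ j, a j * u j) * (a i * v i)))]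
    rw [Finset.sum_sub_distrib, ← Finset.mul_sum]
  have hnormsq : ∀ (x : EuclideanSpace ℝ (Fin n)), ∑ i, x i ^ 2 = ‖x‖ ^ 2 := by
    intro x
    rw [← real_inner_self_eq_norm_sq, PiLp.inner_apply]
    simp only [RCLike.inner_apply, starRingEnd_apply, star_trivial]
    exact Finset.sum_congr rfl fun i _ => sq (x i)
  apply ContinuousLinearMap.opNorm_le_bound _ (by norm_num)
  intro x
  have h1 : ‖T x‖ ^ 2 = Bf a (fun i => x i) (fun i => (T x) i) := by
    rw [← real_inner_self_eq_norm_sq]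
    exact hform x (T x)
  have hcs := Bf_cs a ha hsum (fun i => x i) (fun i => (T x) i)
  have hx := Bf_le_half a ha hsum (fun i => x i)
  have hTx := Bf_le_half a ha hsum (fun i => (T x) i)
  have hx0 := Bf_nonneg a ha hsum (fun i => x i)
  have hTx0 := Bf_nonneg a ha hsum (fun i => (T x) i)
  rw [hnormsq x] at hx
  rw [hnormsq (T x)] at hTx
  have hnx : (0:ℝ) ≤ ‖x‖ := norm_nonneg _
  have hnTx : (0:ℝ) ≤ ‖T x‖ := norm_nonneg _
  rcases eq_or_lt_of_le hnTx with h | h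
  · rw [← h]; positivity
  · have h4 : ‖T x‖ ^ 4 ≤ (1 / 2 * ‖x‖ ^ 2) * (1 / 2 * ‖T x‖ ^ 2) := by
      calc ‖T x‖ ^ 4 = (‖T x‖ ^ 2) ^ 2 := by ring
        _ = (Bf a (fun i => x i) fun i => T x i) ^ 2 := by rw [h1]
        _ ≤ (Bf a (fun i => x i) fun i => x i) * Bf a (fun i => T x i) fun i => T x i := hcs
        _ ≤ _ := mul_le_mul hx hTx hTx0 (by positivity)
    have h5 : ‖T x‖ ^ 2 ≤ (1 / 2 * ‖x‖) ^ 2 := by nlinarith [h4, mul_pos h h]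
    nlinarith [h5, hnx]
end

section
/- Let x₁, x₂ ∈ ℝ^d, W ∈ ℝ^{V×d} with rows w₁, …, w_V, and b ∈ ℝ^V. Define P₁ = softmax(W x₁ + b) and P₂ = softmax(W x₂ + b). Then Σ_{k=1}^V P₁(k) P₂(k) ≥ Σ_{k=1}^V P₁(k)² − (max_k ‖w_k‖₂) · ‖x₁ − x₂‖₂. -/
open scoped RealInnerProductSpace

private lemma key_exp (x : ℝ) (hx : 0 ≤ x) : 2 * (Real.exp x - 1) ≤ x * (Real.exp x + 1) := by
  have mono : MonotoneOn (fun t : ℝ => t * Real.exp t + t - 2 * Real.exp t + 2) (Set.Ici 0) := by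
    have hd : ∀ y : ℝ, HasDerivAt (fun t : ℝ => t * Real.exp t + t - 2 * Real.exp t + 2)
        (1 * Real.exp y + y * Real.exp y + 1 - 2 * Real.exp y) y := by
      intro y
      exact ((((hasDerivAt_id y).mul (Real.hasDerivAt_exp y)).add (hasDerivAt_id y)).sub
        ((Real.hasDerivAt_exp y).const_mul 2)).add_const 2
    apply monotoneOn_of_deriv_nonneg (convex_Ici 0)
    · exact Continuous.continuousOn (by continuity)
    · intro y _; exact (hd y).differentiableAt.differentiableWithinAt
    · intro y hy
      rw [(hd y).deriv]
      rcases le_or_gt 1 y with h1 | h1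
      · nlinarith [Real.exp_pos y]
      · have h2 : -y + 1 ≤ Real.exp (-y) := Real.add_one_le_exp (-y)
        have h3 : Real.exp (-y) * Real.exp y = 1 := by
          rw [← Real.exp_add]; simp
        nlinarith [Real.exp_pos y, Real.exp_pos (-y)]
  have h0 := mono (Set.self_mem_Ici) (Set.mem_Ici.2 hx) hx
  simp [Real.exp_zero] at h0
  nlinarith [h0]

private lemma exp_pair {a b s : ℝ} (h : |a - b| ≤ 2 * s) :
    |Real.exp a - Real.exp b| ≤ s * (Real.exp a + Real.exp b) := by
  wlog hab : b ≤ a generalizing a b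
  · have := this (by rwa [abs_sub_comm]) (le_of_not_ge hab)
    rwa [abs_sub_comm, add_comm] at this
  rw [abs_of_nonneg (sub_nonneg.2 (Real.exp_le_exp.2 hab))]
  rw [abs_of_nonneg (sub_nonneg.2 hab)] at h
  have key := key_exp (a - b) (sub_nonneg.2 hab)
  have e : Real.exp (a - b) * Real.exp b = Real.exp a := by
    rw [← Real.exp_add]; ring_nf
  nlinarith [Real.exp_pos b, Real.exp_pos (a - b), Real.exp_pos a,
    mul_le_mul_of_nonneg_right key (Real.exp_pos b).le]

set_option maxHeartbeats 1000000 in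
/-- Stability of the LM head: with `P₁ = softmax(W x₁ + b)` and `P₂ = softmax(W x₂ + b)`,
the collision probability satisfies
`Σ_k P₁(k) P₂(k) ≥ Σ_k P₁(k)² − (max_k ‖w_k‖₂) ‖x₁ − x₂‖₂`. -/
theorem lm_head_stability (d V : ℕ) (hV : 0 < V)
    (w : Fin V → EuclideanSpace ℝ (Fin d)) (b : Fin V → ℝ)
    (x₁ x₂ : EuclideanSpace ℝ (Fin d))
    (P₁ P₂ : Fin V → ℝ)
    (hP₁ : ∀ k, P₁ k = Real.exp (⟪w k, x₁⟫ + b k) / ∑ j, Real.exp (⟪w j, x₁⟫ + b j))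
    (hP₂ : ∀ k, P₂ k = Real.exp (⟪w k, x₂⟫ + b k) / ∑ j, Real.exp (⟪w j, x₂⟫ + b j)) :
    ∑ k, P₁ k * P₂ k ≥ ∑ k, (P₁ k) ^ 2 -
      (Finset.univ.sup' (Finset.univ_nonempty_iff.mpr ⟨⟨0, hV⟩⟩) fun k => ‖w k‖)
        * ‖x₁ - x₂‖ := by
  have hne : (Finset.univ : Finset (Fin V)).Nonempty := Finset.univ_nonempty_iff.mpr ⟨⟨0, hV⟩⟩
  set L : ℝ := Finset.univ.sup' (Finset.univ_nonempty_iff.mpr ⟨⟨0, hV⟩⟩) fun k => ‖w k‖ with hLdef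
  set ε : ℝ := L * ‖x₁ - x₂‖ with hεdef
  have hLk : ∀ k, ‖w k‖ ≤ L := fun k => Finset.le_sup' (fun k => ‖w k‖) (Finset.mem_univ k)
  have ht : ∀ k, |(⟪w k, x₂⟫ + b k) - (⟪w k, x₁⟫ + b k)| ≤ ε := by
    intro k
    have he : (⟪w k, x₂⟫ + b k) - (⟪w k, x₁⟫ + b k) = ⟪w k, x₂ - x₁⟫ := by
      rw [inner_sub_right]; ring
    rw [he]
    calc |⟪w k, x₂ - x₁⟫| ≤ ‖w k‖ * ‖x₂ - x₁‖ := abs_real_inner_le_norm _ _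
      _ = ‖w k‖ * ‖x₁ - x₂‖ := by rw [norm_sub_rev]
      _ ≤ L * ‖x₁ - x₂‖ := mul_le_mul_of_nonneg_right (hLk k) (norm_nonneg _)
  have hZ₁ : 0 < ∑ j, Real.exp (⟪w j, x₁⟫ + b j) :=
    Finset.sum_pos (fun j _ => Real.exp_pos _) hne
  have hZ₂ : 0 < ∑ j, Real.exp (⟪w j, x₂⟫ + b j) :=
    Finset.sum_pos (fun j _ => Real.exp_pos _) hne
  have hq1 : ∑ k, P₁ k = 1 := by
    rw [Finset.sum_congr rfl fun k _ => hP₁ k, ← Finset.sum_div, div_self (ne_of_gt hZ₁)]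
  have hp1 : ∑ k, P₂ k = 1 := by
    rw [Finset.sum_congr rfl fun k _ => hP₂ k, ← Finset.sum_div, div_self (ne_of_gt hZ₂)]
  have hq0 : ∀ k, 0 ≤ P₁ k := by
    intro k; rw [hP₁ k]; exact div_nonneg (Real.exp_pos _).le hZ₁.le
  have hqle : ∀ k, P₁ k ≤ 1 := by
    intro k; rw [hP₁ k]
    exact (div_le_one hZ₁).mpr
      (Finset.single_le_sum (f := fun j => Real.exp (⟪w j, x₁⟫ + b j))
        (fun i _ => (Real.exp_pos _).le) (Finset.mem_univ k))
  -- pairwise bound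
  have pair : ∀ j k, (P₁ k - P₁ j) * (P₂ j * P₁ k - P₂ k * P₁ j)
      ≤ ε * (P₂ j * P₁ k + P₂ k * P₁ j) := by
    intro j k
    set A : ℝ := (⟪w j, x₂⟫ + b j) + (⟪w k, x₁⟫ + b k) with hAdef
    set B : ℝ := (⟪w k, x₂⟫ + b k) + (⟪w j, x₁⟫ + b j) with hBdef
    have hZZ : 0 < (∑ j, Real.exp (⟪w j, x₂⟫ + b j)) * (∑ j, Real.exp (⟪w j, x₁⟫ + b j)) :=
      mul_pos hZ₂ hZ₁
    have hA : P₂ j * P₁ k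
        = Real.exp A / ((∑ j, Real.exp (⟪w j, x₂⟫ + b j)) * (∑ j, Real.exp (⟪w j, x₁⟫ + b j))) := by
      rw [hP₂ j, hP₁ k, div_mul_div_comm, ← Real.exp_add]
    have hB : P₂ k * P₁ j
        = Real.exp B / ((∑ j, Real.exp (⟪w j, x₂⟫ + b j)) * (∑ j, Real.exp (⟪w j, x₁⟫ + b j))) := by
      rw [hP₂ k, hP₁ j, div_mul_div_comm, ← Real.exp_add]
    have hAB : |A - B| ≤ 2 * ε := by
      have e : A - B = ((⟪w j, x₂⟫ + b j) - (⟪w j, x₁⟫ + b j))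
          - ((⟪w k, x₂⟫ + b k) - (⟪w k, x₁⟫ + b k)) := by rw [hAdef, hBdef]; ring
      rw [e]
      calc |_ - _| ≤ |(⟪w j, x₂⟫ + b j) - (⟪w j, x₁⟫ + b j)|
            + |(⟪w k, x₂⟫ + b k) - (⟪w k, x₁⟫ + b k)| := abs_sub _ _
        _ ≤ ε + ε := add_le_add (ht j) (ht k)
        _ = 2 * ε := by ring
    have hexp : |Real.exp A - Real.exp B| ≤ ε * (Real.exp A + Real.exp B) := exp_pair hAB
    have habs : |P₂ j * P₁ k - P₂ k * P₁ j| ≤ ε * (P₂ j * P₁ k + P₂ k * P₁ j) := by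
      rw [hA, hB, ← sub_div, ← add_div, abs_div, abs_of_pos hZZ, ← mul_div_assoc]
      gcongr
    have h1 : |P₁ k - P₁ j| ≤ 1 := by
      rw [abs_le]
      constructor <;> nlinarith [hq0 j, hq0 k, hqle j, hqle k]
    calc (P₁ k - P₁ j) * (P₂ j * P₁ k - P₂ k * P₁ j)
        ≤ |(P₁ k - P₁ j) * (P₂ j * P₁ k - P₂ k * P₁ j)| := le_abs_self _
      _ = |P₁ k - P₁ j| * |P₂ j * P₁ k - P₂ k * P₁ j| := abs_mul _ _
      _ ≤ 1 * (ε * (P₂ j * P₁ k + P₂ k * P₁ j)) :=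
          mul_le_mul h1 habs (abs_nonneg _) zero_le_one
      _ = ε * (P₂ j * P₁ k + P₂ k * P₁ j) := one_mul _
  -- sum the pairwise bound
  have sum_le : ∑ j, ∑ k, (P₁ k - P₁ j) * (P₂ j * P₁ k - P₂ k * P₁ j)
      ≤ ∑ j, ∑ k, ε * (P₂ j * P₁ k + P₂ k * P₁ j) :=
    Finset.sum_le_sum fun j _ => Finset.sum_le_sum fun k _ => pair j k
  have rhs_eq : ∑ j, ∑ k, ε * (P₂ j * P₁ k + P₂ k * P₁ j) = 2 * ε := by
    have hin : ∀ j : Fin V, ∑ k, ε * (P₂ j * P₁ k + P₂ k * P₁ j) = ε * (P₂ j + P₁ j) := by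
      intro j
      rw [← Finset.mul_sum, Finset.sum_add_distrib, ← Finset.mul_sum, hq1,
        ← Finset.sum_mul, hp1]
      ring
    rw [Finset.sum_congr rfl fun j _ => hin j, ← Finset.mul_sum, Finset.sum_add_distrib,
      hq1, hp1]
    ring
  have lhs_eq : ∑ j, ∑ k, (P₁ k - P₁ j) * (P₂ j * P₁ k - P₂ k * P₁ j)
      = 2 * (∑ k, (P₁ k) ^ 2) - 2 * (∑ k, P₁ k * P₂ k) := by
    have hin : ∀ j : Fin V, ∑ k, (P₁ k - P₁ j) * (P₂ j * P₁ k - P₂ k * P₁ j)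
        = P₂ j * (∑ k, (P₁ k) ^ 2) - (∑ k, P₁ k * P₂ k) * P₁ j - P₂ j * P₁ j + (P₁ j) ^ 2 := by
      intro j
      have e1 : ∀ k, (P₁ k - P₁ j) * (P₂ j * P₁ k - P₂ k * P₁ j)
          = P₂ j * (P₁ k) ^ 2 - (P₁ k * P₂ k) * P₁ j - (P₂ j * P₁ j) * P₁ k
            + (P₁ j) ^ 2 * P₂ k := by
        intro k; ring
      rw [Finset.sum_congr rfl fun k _ => e1 k, Finset.sum_add_distrib,
        Finset.sum_sub_distrib, Finset.sum_sub_distrib, ← Finset.mul_sum, ← Finset.sum_mul,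
        ← Finset.mul_sum, ← Finset.mul_sum, hq1, hp1]
      ring
    have hc : ∑ j, P₂ j * P₁ j = ∑ j, P₁ j * P₂ j :=
      Finset.sum_congr rfl fun j _ => mul_comm _ _
    rw [Finset.sum_congr rfl fun j _ => hin j, Finset.sum_add_distrib,
      Finset.sum_sub_distrib, Finset.sum_sub_distrib, ← Finset.sum_mul, ← Finset.mul_sum,
      hq1, hp1, hc]
    ring
  rw [lhs_eq, rhs_eq] at sum_le
  linarith
end

section
/- Let z₁, z₂ ∈ ℝ^n and let P₁ = softmax(z₁), P₂ = softmax(z₂). Then the total variation distance satisfies d_TV(P₁, P₂) = (1/2) Σ_{k=1}^n |P₁(k) − P₂(k)| ≤ ‖z₁ − z₂‖_∞ = max_k |z_{1,k} − z_{2,k}|. -/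
private lemma abs_eq_two_max (x : ℝ) : |x| = 2 * max x 0 - x := by
  rcases le_or_gt 0 x with h | h
  · rw [abs_of_nonneg h, max_eq_left h]; ring
  · rw [abs_of_neg h, max_eq_right h.le]; ring

private lemma max_sub_max_neg (x : ℝ) : max x 0 - max (-x) 0 = x := by
  rcases le_or_gt 0 x with h | h
  · rw [max_eq_left h, max_eq_right (neg_nonpos.mpr h)]; ring
  · rw [max_eq_right h.le, max_eq_left (neg_nonneg.mpr h.le)]; ring

private lemma half_abs_sum {n : ℕ} (f g : Fin n → ℝ) (h : ∑ k, f k = ∑ k, g k) :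
    (1 / 2) * ∑ k, |f k - g k| = ∑ k, max (f k - g k) 0 := by
  have : ∑ k, |f k - g k| = ∑ k, (2 * max (f k - g k) 0 - (f k - g k)) := by
    refine Finset.sum_congr rfl fun k _ => abs_eq_two_max _
  rw [this, Finset.sum_sub_distrib, Finset.sum_sub_distrib, h, sub_self, sub_zero,
    ← Finset.mul_sum]
  ring

private lemma max_sum_swap {n : ℕ} (f g : Fin n → ℝ) (h : ∑ k, f k = ∑ k, g k) :
    ∑ k, max (f k - g k) 0 = ∑ k, max (g k - f k) 0 := by
  have key : ∀ k, max (f k - g k) 0 = max (g k - f k) 0 + (f k - g k) := by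
    intro k
    have := max_sub_max_neg (f k - g k)
    rw [neg_sub] at this
    linarith
  rw [Finset.sum_congr rfl fun k _ => key k, Finset.sum_add_distrib,
    Finset.sum_sub_distrib, h, sub_self, add_zero]

private lemma softmax_onesided {n : ℕ} (ne : (Finset.univ : Finset (Fin n)).Nonempty)
    (z₁ z₂ : Fin n → ℝ)
    (hS : ∑ j, Real.exp (z₂ j) ≤ ∑ j, Real.exp (z₁ j)) :
    ∑ k, max (Real.exp (z₁ k) / (∑ j, Real.exp (z₁ j))
        - Real.exp (z₂ k) / (∑ j, Real.exp (z₂ j))) 0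
      ≤ Finset.univ.sup' ne fun k => |z₁ k - z₂ k| := by
  set S₁ := ∑ j, Real.exp (z₁ j) with hS₁def
  set S₂ := ∑ j, Real.exp (z₂ j) with hS₂def
  have hS₁ : 0 < S₁ := Finset.sum_pos (fun i _ => Real.exp_pos _) ne
  have hS₂ : 0 < S₂ := Finset.sum_pos (fun i _ => Real.exp_pos _) ne
  set δ := Finset.univ.sup' ne fun k => |z₁ k - z₂ k| with hδdef
  obtain ⟨k₀, hk₀⟩ := id ne
  have hδ0 : 0 ≤ δ := by
    rw [hδdef]; exact le_trans (abs_nonneg _) (Finset.le_sup' (fun k => |z₁ k - z₂ k|) hk₀)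
  have key : ∀ k, max (Real.exp (z₁ k) / S₁ - Real.exp (z₂ k) / S₂) 0
      ≤ δ * (Real.exp (z₁ k) / S₁) := by
    intro k
    have hδk : z₁ k - z₂ k ≤ δ := by
      rw [hδdef]
      exact le_trans (le_abs_self _) (Finset.le_sup' (fun k => |z₁ k - z₂ k|) (Finset.mem_univ k))
    refine max_le ?_ (by positivity)
    have h1 : Real.exp (z₂ k) / S₁ ≤ Real.exp (z₂ k) / S₂ := by
      gcongr
    have hexp : Real.exp (z₂ k) = Real.exp (z₁ k) * Real.exp (z₂ k - z₁ k) := by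
      rw [← Real.exp_add]; ring_nf
    have h2 : 1 - Real.exp (z₂ k - z₁ k) ≤ z₁ k - z₂ k := by
      nlinarith [Real.add_one_le_exp (z₂ k - z₁ k)]
    have h3 : Real.exp (z₁ k) - Real.exp (z₂ k) ≤ δ * Real.exp (z₁ k) := by
      rw [hexp]
      nlinarith [Real.exp_pos (z₁ k)]
    calc Real.exp (z₁ k) / S₁ - Real.exp (z₂ k) / S₂
        ≤ Real.exp (z₁ k) / S₁ - Real.exp (z₂ k) / S₁ := by linarith
      _ = (Real.exp (z₁ k) - Real.exp (z₂ k)) / S₁ := by ring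
      _ ≤ (δ * Real.exp (z₁ k)) / S₁ := by gcongr
      _ = δ * (Real.exp (z₁ k) / S₁) := by ring
  calc ∑ k, max (Real.exp (z₁ k) / S₁ - Real.exp (z₂ k) / S₂) 0
      ≤ ∑ k, δ * (Real.exp (z₁ k) / S₁) := Finset.sum_le_sum fun k _ => key k
    _ = δ * (S₁ / S₁) := by rw [← Finset.mul_sum, ← Finset.sum_div]
    _ = δ := by rw [div_self hS₁.ne', mul_one]

/-- Total variation stability of softmax:
`(1/2) Σ_k |P₁(k) − P₂(k)| ≤ max_k |z_{1,k} − z_{2,k}|` for `P_i = softmax(z_i)`. -/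
theorem softmax_tv_stability (n : ℕ) (hn : 0 < n) (z₁ z₂ : Fin n → ℝ)
    (P₁ P₂ : Fin n → ℝ)
    (hP₁ : ∀ k, P₁ k = Real.exp (z₁ k) / ∑ j, Real.exp (z₁ j))
    (hP₂ : ∀ k, P₂ k = Real.exp (z₂ k) / ∑ j, Real.exp (z₂ j)) :
    (1 / 2) * ∑ k, |P₁ k - P₂ k| ≤
      Finset.univ.sup' (Finset.univ_nonempty_iff.mpr ⟨⟨0, hn⟩⟩)
        fun k => |z₁ k - z₂ k| := by
  have ne : (Finset.univ : Finset (Fin n)).Nonempty := Finset.univ_nonempty_iff.mpr ⟨⟨0, hn⟩⟩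
  have hS₁ : (0:ℝ) < ∑ j, Real.exp (z₁ j) := Finset.sum_pos (fun i _ => Real.exp_pos _) ne
  have hS₂ : (0:ℝ) < ∑ j, Real.exp (z₂ j) := Finset.sum_pos (fun i _ => Real.exp_pos _) ne
  have hsum : ∑ k, P₁ k = ∑ k, P₂ k := by
    simp only [hP₁, hP₂, ← Finset.sum_div]
    rw [div_self hS₁.ne', div_self hS₂.ne']
  rw [half_abs_sum P₁ P₂ hsum]
  rcases le_total (∑ j, Real.exp (z₂ j)) (∑ j, Real.exp (z₁ j)) with h | h
  · have := softmax_onesided ne z₁ z₂ h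
    simpa only [← hP₁, ← hP₂] using this
  · rw [max_sum_swap P₁ P₂ hsum]
    have := softmax_onesided ne z₂ z₁ h
    simp only [← hP₁, ← hP₂] at this
    refine this.trans (le_of_eq ?_)
    congr 1
    ext k
    exact abs_sub_comm _ _
end

section
/- Let P, δ ∈ ℝ^n with Σ_{k=1}^n δ_k = 0. Then |Σ_{k=1}^n P_k δ_k| ≤ ((max_k P_k − min_k P_k)/2) · Σ_{k=1}^n |δ_k|. -/
/-- If `Σ_k δ_k = 0`, then `|Σ_k P_k δ_k| ≤ ((max_k P_k − min_k P_k)/2) · Σ_k |δ_k|`. -/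
theorem weighted_sum_range_bound (n : ℕ) (hn : 0 < n) (P δ : Fin n → ℝ)
    (hδ : ∑ k, δ k = 0) :
    |∑ k, P k * δ k| ≤
      ((Finset.univ.sup' (Finset.univ_nonempty_iff.mpr ⟨⟨0, hn⟩⟩) P
          - Finset.univ.inf' (Finset.univ_nonempty_iff.mpr ⟨⟨0, hn⟩⟩) P) / 2)
        * ∑ k, |δ k| := by
  have hne : (Finset.univ : Finset (Fin n)).Nonempty := Finset.univ_nonempty_iff.mpr ⟨⟨0, hn⟩⟩
  set M := Finset.univ.sup' hne P with hM
  set m := Finset.univ.inf' hne P with hm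
  set c := (M + m) / 2 with hc
  have key : ∑ k, P k * δ k = ∑ k, (P k - c) * δ k := by
    simp [sub_mul, Finset.sum_sub_distrib, ← Finset.mul_sum, hδ]
  rw [key]
  calc |∑ k, (P k - c) * δ k| ≤ ∑ k, |(P k - c) * δ k| := Finset.abs_sum_le_sum_abs _ _
    _ ≤ ∑ k, ((M - m) / 2) * |δ k| := by
        apply Finset.sum_le_sum
        intro k _
        rw [abs_mul]
        apply mul_le_mul_of_nonneg_right _ (abs_nonneg _)
        rw [abs_le]
        constructor
        · have : m ≤ P k := Finset.inf'_le _ (Finset.mem_univ k)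
          simp only [hc]; linarith
        · have : P k ≤ M := Finset.le_sup' _ (Finset.mem_univ k)
          simp only [hc]; linarith
    _ = ((M - m) / 2) * ∑ k, |δ k| := by rw [Finset.mul_sum]
end

section
/- Let P₁, P₂ ∈ ℝ^n be probability vectors (nonnegative entries summing to 1). Then Σ_{k=1}^n P₁(k) P₂(k) ≥ Σ_{k=1}^n P₁(k)² − d_TV(P₁, P₂) · range(P₁), where d_TV(P₁,P₂) = (1/2) Σ_k |P₁(k) − P₂(k)| and range(P₁) = max_k P₁(k) − min_k P₁(k). In particular, since range(P₁) ≤ 1, Σ_k P₁(k)P₂(k) ≥ Σ_k P₁(k)² − d_TV(P₁, P₂). -/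
/-- For probability vectors `P₁, P₂`:
`Σ_k P₁(k)P₂(k) ≥ Σ_k P₁(k)² − d_TV(P₁,P₂) · range(P₁)`, and in particular
`Σ_k P₁(k)P₂(k) ≥ Σ_k P₁(k)² − d_TV(P₁,P₂)` since `range(P₁) ≤ 1`. -/
theorem collision_probability_lower_bound (n : ℕ) (hn : 0 < n) (P₁ P₂ : Fin n → ℝ)
    (h₁0 : ∀ k, 0 ≤ P₁ k) (h₁1 : ∑ k, P₁ k = 1)
    (h₂0 : ∀ k, 0 ≤ P₂ k) (h₂1 : ∑ k, P₂ k = 1) :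
    (∑ k, P₁ k * P₂ k ≥ ∑ k, (P₁ k) ^ 2 -
        ((1 / 2) * ∑ k, |P₁ k - P₂ k|) *
          (Finset.univ.sup' (Finset.univ_nonempty_iff.mpr ⟨⟨0, hn⟩⟩) P₁
            - Finset.univ.inf' (Finset.univ_nonempty_iff.mpr ⟨⟨0, hn⟩⟩) P₁))
    ∧ (∑ k, P₁ k * P₂ k ≥ ∑ k, (P₁ k) ^ 2 - (1 / 2) * ∑ k, |P₁ k - P₂ k|) := by
  have hne : (Finset.univ : Finset (Fin n)).Nonempty := Finset.univ_nonempty_iff.mpr ⟨⟨0, hn⟩⟩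
  set M := Finset.univ.sup' hne P₁ with hM
  set m := Finset.univ.inf' hne P₁ with hm
  have hMk : ∀ k, P₁ k ≤ M := fun k => Finset.le_sup' P₁ (Finset.mem_univ k)
  have hmk : ∀ k, m ≤ P₁ k := fun k => Finset.inf'_le P₁ (Finset.mem_univ k)
  set c := (M + m) / 2 with hc
  have hsum0 : ∑ k, (P₁ k - P₂ k) = 0 := by
    rw [Finset.sum_sub_distrib, h₁1, h₂1]; ring
  have key : ∑ k, (P₁ k)^2 - ∑ k, P₁ k * P₂ k ≤
      ((1 / 2) * ∑ k, |P₁ k - P₂ k|) * (M - m) := by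
    have h1 : ∑ k, (P₁ k)^2 - ∑ k, P₁ k * P₂ k = ∑ k, (P₁ k - c) * (P₁ k - P₂ k) := by
      rw [Finset.sum_congr rfl (fun k _ => by ring :
        ∀ k ∈ Finset.univ, (P₁ k - c) * (P₁ k - P₂ k)
          = (P₁ k)^2 - P₁ k * P₂ k - c * (P₁ k - P₂ k))]
      rw [Finset.sum_sub_distrib, Finset.sum_sub_distrib, ← Finset.mul_sum, hsum0]
      ring
    rw [h1]
    calc ∑ k, (P₁ k - c) * (P₁ k - P₂ k)
        ≤ ∑ k, ((M - m) / 2) * |P₁ k - P₂ k| := by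
          apply Finset.sum_le_sum
          intro k _
          calc (P₁ k - c) * (P₁ k - P₂ k) ≤ |(P₁ k - c) * (P₁ k - P₂ k)| := le_abs_self _
            _ = |P₁ k - c| * |P₁ k - P₂ k| := abs_mul _ _
            _ ≤ ((M - m) / 2) * |P₁ k - P₂ k| := by
                apply mul_le_mul_of_nonneg_right _ (abs_nonneg _)
                rw [abs_le]
                constructor
                · have := hmk k; rw [hc]; linarith
                · have := hMk k; rw [hc]; linarith
      _ = ((1 / 2) * ∑ k, |P₁ k - P₂ k|) * (M - m) := by
          rw [← Finset.mul_sum]; ring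
  have first : ∑ k, P₁ k * P₂ k ≥ ∑ k, (P₁ k)^2 -
      ((1 / 2) * ∑ k, |P₁ k - P₂ k|) * (M - m) := by linarith
  refine ⟨first, ?_⟩
  have hd0 : 0 ≤ (1 / 2) * ∑ k, |P₁ k - P₂ k| := by
    apply mul_nonneg (by norm_num)
    exact Finset.sum_nonneg fun k _ => abs_nonneg _
  have hM1 : M ≤ 1 := by
    rw [hM]
    apply Finset.sup'_le
    intro k _
    rw [← h₁1]
    exact Finset.single_le_sum (fun j _ => h₁0 j) (Finset.mem_univ k)
  have hm0 : 0 ≤ m := Finset.le_inf' hne _ (fun k _ => h₁0 k)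
  have : ((1 / 2) * ∑ k, |P₁ k - P₂ k|) * (M - m) ≤ (1 / 2) * ∑ k, |P₁ k - P₂ k| := by
    nlinarith
  linarith
end

section
/- Let n ≥ 1, let v₁, …, v_n ∈ ℝ, let v ∈ ℝ be a target value, and let w₁, …, w_n ∈ ℝ with w_i ≥ 0 for all i and w̄ := (1/n) Σ_i w_i > 0. Set x_i = v_i − v, x̄ = (1/n) Σ_i x_i, and Cov(w, x) = (1/n) Σ_i w_i x_i − w̄ x̄. Assume the bias-corrective similarity weighting conditions: (i) x̄ · Cov(w, x) ≤ 0, and (ii) |Cov(w, x)| ≤ 2 w̄ |x̄|. Then the probability-weighted estimator has no larger absolute bias than the average estimator: |(Σ_i w_i v_i)/(Σ_i w_i) − v| ≤ |(1/n) Σ_i v_i − v|. -/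
/-!
Write `x_i = v_i - v`, `W = Σ w_i` and `C = Cov(w, x)`. The bias of the probability-weighted
estimator is `Σ w_i x_i / W = x̄ + C / w̄`, i.e. the average estimator's bias `x̄` shifted by
`C / w̄`. The two conditions say that this shift points back towards `0` and has length at most
`2 |x̄|`, so it cannot overshoot `-x̄`.
-/

open Finset

theorem abs_add_le_abs_of_mul_nonpos {x y : ℝ} (hxy : x * y ≤ 0) (hy : |y| ≤ 2 * |x|) :
    |x + y| ≤ |x| := by
  have hxy_abs : |x| * |y| = -(x * y) := by rw [← abs_mul, abs_of_nonpos hxy]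
  rw [← sq_le_sq]
  -- `y² = |y|² ≤ 2 |x| |y| = -2 x y`
  nlinarith [mul_le_mul_of_nonneg_right hy (abs_nonneg y), sq_abs y]

theorem abs_add_div_le_abs {x C w : ℝ} (hw : 0 < w) (hsign : x * C ≤ 0)
    (hmag : |C| ≤ 2 * w * |x|) : |x + C / w| ≤ |x| := by
  refine abs_add_le_abs_of_mul_nonpos ?_ ?_
  · rw [← mul_div_assoc]
    exact div_nonpos_of_nonpos_of_nonneg hsign hw.le
  · rw [abs_div, abs_of_pos hw, div_le_iff₀ hw]
    linarith

theorem Finset.sum_mul_div_sum_sub {ι : Type*} (s : Finset ι) (w v : ι → ℝ) (a : ℝ)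
    (hw : ∑ i ∈ s, w i ≠ 0) :
    (∑ i ∈ s, w i * v i) / (∑ i ∈ s, w i) - a = (∑ i ∈ s, w i * (v i - a)) / ∑ i ∈ s, w i := by
  simp only [mul_sub, sum_sub_distrib, ← sum_mul]
  field_simp

theorem Fin.one_div_mul_sum_sub_const {n : ℕ} (hn : (n : ℝ) ≠ 0) (v : Fin n → ℝ) (a : ℝ) :
    (1 / (n : ℝ)) * ∑ i, (v i - a) = (1 / (n : ℝ)) * (∑ i, v i) - a := by
  simp only [sum_sub_distrib, sum_const, nsmul_eq_mul]
  field_simp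

theorem probability_weighted_bias_improvement_general (n : ℕ)
    (v : Fin n → ℝ) (vt : ℝ)
    (w : Fin n → ℝ)
    (hwbar : 0 < (1 / (n : ℝ)) * ∑ i, w i)
    (hsign : ((1 / (n : ℝ)) * ∑ i, (v i - vt)) *
        ((1 / (n : ℝ)) * (∑ i, w i * (v i - vt))
          - ((1 / (n : ℝ)) * ∑ i, w i) * ((1 / (n : ℝ)) * ∑ i, (v i - vt))) ≤ 0)
    (hmag : |(1 / (n : ℝ)) * (∑ i, w i * (v i - vt))
          - ((1 / (n : ℝ)) * ∑ i, w i) * ((1 / (n : ℝ)) * ∑ i, (v i - vt))|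
        ≤ 2 * ((1 / (n : ℝ)) * ∑ i, w i) * |(1 / (n : ℝ)) * ∑ i, (v i - vt)|) :
    |(∑ i, w i * v i) / (∑ i, w i) - vt| ≤ |(1 / (n : ℝ)) * (∑ i, v i) - vt| := by
  have hn : (n : ℝ) ≠ 0 := by
    rintro hn
    simp [hn] at hwbar
  have hW : ∑ i, w i ≠ 0 := by
    rintro hW
    simp [hW] at hwbar
  have hpw : (∑ i, w i * v i) / (∑ i, w i) - vt =
      (1 / (n : ℝ)) * ∑ i, (v i - vt) +
        ((1 / (n : ℝ)) * (∑ i, w i * (v i - vt))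
          - ((1 / (n : ℝ)) * ∑ i, w i) * ((1 / (n : ℝ)) * ∑ i, (v i - vt)))
        / ((1 / (n : ℝ)) * ∑ i, w i) := by
    rw [sum_mul_div_sum_sub _ _ _ _ hW]
    field_simp
    ring
  rw [hpw, ← Fin.one_div_mul_sum_sub_const hn v vt]
  exact abs_add_div_le_abs hwbar hsign hmag

/-- Bias improvement by similarity weighting: under the bias-corrective conditions
(i) `x̄ · Cov(w,x) ≤ 0` and (ii) `|Cov(w,x)| ≤ 2 w̄ |x̄|` (with `x_i = v_i − v`), the
probability-weighted estimator has no larger absolute bias than the average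
estimator: `|(Σ_i w_i v_i)/(Σ_i w_i) − v| ≤ |(1/n) Σ_i v_i − v|`. -/
theorem probability_weighted_bias_improvement (n : ℕ) (hn : 1 ≤ n)
    (v : Fin n → ℝ) (vt : ℝ)
    (w : Fin n → ℝ) (hw : ∀ i, 0 ≤ w i)
    (hwbar : 0 < (1 / (n : ℝ)) * ∑ i, w i)
    (hsign : ((1 / (n : ℝ)) * ∑ i, (v i - vt)) *
        ((1 / (n : ℝ)) * (∑ i, w i * (v i - vt))
          - ((1 / (n : ℝ)) * ∑ i, w i) * ((1 / (n : ℝ)) * ∑ i, (v i - vt))) ≤ 0)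
    (hmag : |(1 / (n : ℝ)) * (∑ i, w i * (v i - vt))
          - ((1 / (n : ℝ)) * ∑ i, w i) * ((1 / (n : ℝ)) * ∑ i, (v i - vt))|
        ≤ 2 * ((1 / (n : ℝ)) * ∑ i, w i) * |(1 / (n : ℝ)) * ∑ i, (v i - vt)|) :
    |(∑ i, w i * v i) / (∑ i, w i) - vt| ≤ |(1 / (n : ℝ)) * (∑ i, v i) - vt| :=
  probability_weighted_bias_improvement_general n v vt w hwbar hsign hmag
end
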